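/- In the degree-0/1 WLPR setting with n ≥ 2, suppose that for every j₀ = 1,…,n−1 one has (∑_{l=j₀}^{n−1} w_{2l+1}) / (∑_{l=j₀}^{n−1} w_{2l}) < ‖w¹‖₁/‖w⁰‖₁, and for every j₁ = 1,…,n−2 one has ‖w¹‖₁/‖w⁰‖₁ < (∑_{l=j₁}^{n−1} w_{2l+1}) / (∑_{l=j₁+1}^{n−1} w_{2l}). Then all coefficients of the difference mask q of S_{1,w^λ} are positive: q_{2j} > 0 and q_{2j+1} > 0 for all j = 1−n,…,n−1. -/

import Mathlib

/-!
Write `E m = ∑_{l=m}^{n-1} w_{2l}` and `O m = ∑_{l=m}^{n-1} w_{2l+1}` (`evenTail`, `oddTail`),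
so that `‖w⁰‖₁ = 1 + 2 E 1` and `‖w¹‖₁ = 2 O 0`. For `0 ≤ m ≤ n - 1` the odd coefficients are
`q_{2m+1} = E m / ‖w⁰‖₁ - O m / ‖w¹‖₁` and `q_{1-2m} = O m / ‖w¹‖₁ - E (m+1) / ‖w⁰‖₁`;
the two descriptions agree at `m = 0` because both rows of the scheme sum to `1`.
The first hypothesis is exactly positivity of `q_{2m+1}` for `m ≥ 1`, the second that of
`q_{1-2m}` for `1 ≤ m ≤ n - 2`; the remaining cases `m = 0` and `m = n - 1` are direct.
Finally `q_{2j} = q_{1-2j}` by the reflection `l ↦ -l`.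
-/

/-- `‖w⁰‖₁ = 1 + 2 ∑_{l=1}^{n−1} w_{2l}`. -/
noncomputable def normW0 (n : ℕ) (w : ℕ → ℝ) : ℝ :=
  1 + 2 * ∑ l ∈ Finset.Icc 1 (n - 1), w (2 * l)

/-- `‖w¹‖₁ = 2 ∑_{l=0}^{n−1} w_{2l+1}`. -/
noncomputable def normW1 (n : ℕ) (w : ℕ → ℝ) : ℝ :=
  2 * ∑ l ∈ Finset.Icc 0 (n - 1), w (2 * l + 1)

/-- The even difference coefficients of `S_{1,w^λ}`:
`q_{2j} = ∑_{l=1−n}^{j} (w_{2|l|}/‖w⁰‖₁ − w_{|2l−1|}/‖w¹‖₁)`. -/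
noncomputable def qEven (n : ℕ) (w : ℕ → ℝ) (j : ℤ) : ℝ :=
  ∑ l ∈ Finset.Icc (1 - (n : ℤ)) j,
    (w ((2 * l).natAbs) / normW0 n w - w ((2 * l - 1).natAbs) / normW1 n w)

/-- The odd difference coefficients of `S_{1,w^λ}`:
`q_{2j+1} = ∑_{l=j}^{n−1} (w_{2|l|}/‖w⁰‖₁ − w_{|2l+1|}/‖w¹‖₁)`. -/
noncomputable def qOdd (n : ℕ) (w : ℕ → ℝ) (j : ℤ) : ℝ :=
  ∑ l ∈ Finset.Icc j ((n : ℤ) - 1),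
    (w ((2 * l).natAbs) / normW0 n w - w ((2 * l + 1).natAbs) / normW1 n w)

open Finset

lemma Finset.sum_Icc_eq_add_sum_Icc_add_one {α M : Type*} [LinearOrder α] [LocallyFiniteOrder α]
    [Add α] [One α] [SuccAddOrder α] [NoMaxOrder α] [AddCommMonoid M] {a b : α} (h : a ≤ b)
    (f : α → M) : ∑ x ∈ Icc a b, f x = f a + ∑ x ∈ Icc (a + 1) b, f x := by
  rw [Icc_add_one_left_eq_Ioc, add_sum_Ioc_eq_sum_Icc h]

lemma Finset.sum_Icc_natCast {M : Type*} [AddCommMonoid M] (a b : ℕ) (f : ℤ → M) :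
    ∑ l ∈ Icc (a : ℤ) (b : ℤ), f l = ∑ l ∈ Icc a b, f l := by
  refine sum_nbij' Int.toNat (↑) ?_ ?_ ?_ ?_ ?_ <;> intro x hx <;>
    simp only [mem_Icc] at hx ⊢
  all_goals first | omega | rw [Int.toNat_of_nonneg (by omega)]

section DifferenceMask

variable (n : ℕ) (w : ℕ → ℝ)

noncomputable def evenTail (m : ℕ) : ℝ := ∑ l ∈ Icc m (n - 1), w (2 * l)

noncomputable def oddTail (m : ℕ) : ℝ := ∑ l ∈ Icc m (n - 1), w (2 * l + 1)

variable {n w}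

lemma evenTail_eq_add {m : ℕ} (hm : m ≤ n - 1) :
    evenTail n w m = w (2 * m) + evenTail n w (m + 1) :=
  sum_Icc_eq_add_sum_Icc_add_one hm _

lemma oddTail_eq_add {m : ℕ} (hm : m ≤ n - 1) :
    oddTail n w m = w (2 * m + 1) + oddTail n w (m + 1) :=
  sum_Icc_eq_add_sum_Icc_add_one hm _

lemma evenTail_pos (hwpos : ∀ l, l ≤ 2 * n - 1 → 0 < w l) {m : ℕ} (hm : m ≤ n - 1) :
    0 < evenTail n w m :=
  sum_pos (fun l hl => hwpos _ (by simp only [mem_Icc] at hl; omega)) (nonempty_Icc.mpr hm)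

lemma oddTail_pos (hwpos : ∀ l, l ≤ 2 * n - 1 → 0 < w l) {m : ℕ} (hm : m ≤ n - 1) (hn : 0 < n) :
    0 < oddTail n w m :=
  sum_pos (fun l hl => hwpos _ (by simp only [mem_Icc] at hl; omega)) (nonempty_Icc.mpr hm)

lemma evenTail_nonneg (hwpos : ∀ l, l ≤ 2 * n - 1 → 0 < w l) (m : ℕ) : 0 ≤ evenTail n w m :=
  sum_nonneg fun l hl => (hwpos _ (by simp only [mem_Icc] at hl; omega)).le

lemma evenTail_eq_zero {m : ℕ} (hm : n - 1 < m) : evenTail n w m = 0 := by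
  rw [evenTail, Icc_eq_empty_of_lt hm, sum_empty]

lemma evenTail_zero (hw0 : w 0 = 1) : evenTail n w 0 = 1 + evenTail n w 1 := by
  rw [evenTail_eq_add (Nat.zero_le _), mul_zero, hw0]

lemma normW0_eq : normW0 n w = 1 + 2 * evenTail n w 1 := rfl

lemma normW1_eq : normW1 n w = 2 * oddTail n w 0 := rfl

lemma normW0_pos (hwpos : ∀ l, l ≤ 2 * n - 1 → 0 < w l) : 0 < normW0 n w := by
  rw [normW0_eq]
  linarith [evenTail_nonneg hwpos 1]

lemma normW1_pos (hwpos : ∀ l, l ≤ 2 * n - 1 → 0 < w l) (hn : 0 < n) : 0 < normW1 n w := by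
  rw [normW1_eq]
  linarith [oddTail_pos hwpos (Nat.zero_le _) hn]

lemma qEven_eq_qOdd_neg (j : ℤ) : qEven n w j = qOdd n w (-j) := by
  refine sum_nbij' (-·) (-·) (fun l hl => ?_) (fun l hl => ?_) (fun l _ => neg_neg l)
    (fun l _ => neg_neg l) (fun l _ => ?_)
  · simp only [mem_Icc] at hl ⊢; omega
  · simp only [mem_Icc] at hl ⊢; omega
  rw [show (2 * -l).natAbs = (2 * l).natAbs by omega,
    show (2 * -l + 1).natAbs = (2 * l - 1).natAbs by omega]

lemma qOdd_eq_add_qOdd_add_one {j : ℤ} (hj : j ≤ n - 1) :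
    qOdd n w j = (w (2 * j).natAbs / normW0 n w - w (2 * j + 1).natAbs / normW1 n w)
      + qOdd n w (j + 1) :=
  sum_Icc_eq_add_sum_Icc_add_one hj _

lemma qOdd_natCast (hn : 0 < n) (m : ℕ) :
    qOdd n w m = evenTail n w m / normW0 n w - oddTail n w m / normW1 n w := by
  rw [qOdd, show (n : ℤ) - 1 = ((n - 1 : ℕ) : ℤ) by omega, sum_Icc_natCast, sum_sub_distrib,
    ← sum_div, ← sum_div]
  congr 3

lemma qOdd_neg_natCast (hn : 0 < n) (hw0 : w 0 = 1) (hwpos : ∀ l, l ≤ 2 * n - 1 → 0 < w l)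
    {m : ℕ} (hm : m ≤ n - 1) :
    qOdd n w (-m) = oddTail n w m / normW1 n w - evenTail n w (m + 1) / normW0 n w := by
  induction m with
  | zero =>
    have hN0 : 1 + 2 * evenTail n w 1 ≠ 0 := (normW0_pos hwpos).ne'
    have hO : oddTail n w 0 ≠ 0 := (oddTail_pos hwpos (Nat.zero_le _) hn).ne'
    -- both rows of the scheme sum to one: `E 0 + E 1 = ‖w⁰‖₁` and `2 O 0 = ‖w¹‖₁`
    have hO2 : oddTail n w 0 / (2 * oddTail n w 0) = 1 / 2 := by field_simp
    have hrow : (1 + evenTail n w 1) / (1 + 2 * evenTail n w 1)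
        + evenTail n w 1 / (1 + 2 * evenTail n w 1) = 1 := by
      rw [← add_div, div_eq_one_iff_eq hN0]; ring
    rw [Nat.cast_zero, neg_zero, ← Nat.cast_zero, qOdd_natCast hn, evenTail_zero hw0, normW0_eq,
      normW1_eq]
    linarith
  | succ k ih =>
    rw [show -((k + 1 : ℕ) : ℤ) = -k - 1 by push_cast; ring,
      qOdd_eq_add_qOdd_add_one (by omega), sub_add_cancel, ih (by omega),
      oddTail_eq_add (by omega), evenTail_eq_add hm,
      show (2 * (-(k : ℤ) - 1)).natAbs = 2 * (k + 1) by omega,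
      show (2 * (-(k : ℤ) - 1) + 1).natAbs = 2 * k + 1 by omega]
    ring

variable (hwpos : ∀ l, l ≤ 2 * n - 1 → 0 < w l) (hn : 0 < n)
include hwpos hn

lemma qOdd_zero_pos (hw0 : w 0 = 1) : 0 < qOdd n w 0 := by
  have hO := oddTail_pos hwpos (Nat.zero_le _) hn
  have hE1 := evenTail_nonneg hwpos 1
  rw [← Nat.cast_zero (R := ℤ), qOdd_natCast hn, sub_pos, evenTail_zero hw0, normW0_eq,
    normW1_eq,     div_lt_div_iff₀ (by positivity) (by positivity)]
  nlinarith

lemma qOdd_natCast_pos {m : ℕ} (hm : m ≤ n - 1)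
    (h : oddTail n w m / evenTail n w m < normW1 n w / normW0 n w) : 0 < qOdd n w m := by
  rw [div_lt_div_iff₀ (evenTail_pos hwpos hm) (normW0_pos hwpos)] at h
  rw [qOdd_natCast hn, sub_pos, div_lt_div_iff₀ (normW1_pos hwpos hn) (normW0_pos hwpos)]
  linarith

lemma qOdd_neg_natCast_pos (hw0 : w 0 = 1) {m : ℕ} (hm : m + 1 ≤ n - 1)
    (h : normW1 n w / normW0 n w < oddTail n w m / evenTail n w (m + 1)) :
    0 < qOdd n w (-m) := by
  rw [div_lt_div_iff₀ (normW0_pos hwpos) (evenTail_pos hwpos hm)] at h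
  rw [qOdd_neg_natCast hn hw0 hwpos (by omega), sub_pos,
    div_lt_div_iff₀ (normW0_pos hwpos) (normW1_pos hwpos hn)]
  linarith

lemma qOdd_neg_pred_pos (hw0 : w 0 = 1) : 0 < qOdd n w (-((n - 1 : ℕ) : ℤ)) := by
  rw [qOdd_neg_natCast hn hw0 hwpos le_rfl, evenTail_eq_zero (by omega), zero_div, sub_zero]
  exact div_pos (oddTail_pos hwpos le_rfl hn) (normW1_pos hwpos hn)

end DifferenceMask

lemma qOdd_pos {n : ℕ} {w : ℕ → ℝ} (hw0 : w 0 = 1) (hwpos : ∀ l, l ≤ 2 * n - 1 → 0 < w l)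
    (h1 : ∀ m, 1 ≤ m → m ≤ n - 1 →
      oddTail n w m / evenTail n w m < normW1 n w / normW0 n w)
    (h2 : ∀ m, 1 ≤ m → m ≤ n - 2 →
      normW1 n w / normW0 n w < oddTail n w m / evenTail n w (m + 1))
    {j : ℤ} (hj1 : 1 - (n : ℤ) ≤ j) (hj2 : j ≤ (n : ℤ) - 1) : 0 < qOdd n w j := by
  have hn : 0 < n := by omega
  obtain ⟨m, rfl | rfl⟩ := j.eq_nat_or_neg
  · rcases m.eq_zero_or_pos with rfl | hm
    · exact qOdd_zero_pos hwpos hn hw0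
    · exact qOdd_natCast_pos hwpos hn (by omega) (h1 m hm (by omega))
  · rcases m.eq_zero_or_pos with rfl | hm
    · simpa using qOdd_zero_pos hwpos hn hw0
    rcases (show m ≤ n - 2 ∨ m = n - 1 by omega) with hm' | rfl
    · exact qOdd_neg_natCast_pos hwpos hn hw0 (by omega) (h2 m hm hm')
    · exact qOdd_neg_pred_pos hwpos hn hw0

theorem stmt9_general (n : ℕ)
    (w : ℕ → ℝ) (hw0 : w 0 = 1) (hwpos : ∀ l : ℕ, l ≤ 2 * n - 1 → 0 < w l)
    (h1 : ∀ j₀ : ℕ, 1 ≤ j₀ → j₀ ≤ n - 1 →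
      (∑ l ∈ Finset.Icc j₀ (n - 1), w (2 * l + 1)) /
        (∑ l ∈ Finset.Icc j₀ (n - 1), w (2 * l)) < normW1 n w / normW0 n w)
    (h2 : ∀ j₁ : ℕ, 1 ≤ j₁ → j₁ ≤ n - 2 →
      normW1 n w / normW0 n w <
        (∑ l ∈ Finset.Icc j₁ (n - 1), w (2 * l + 1)) /
          (∑ l ∈ Finset.Icc (j₁ + 1) (n - 1), w (2 * l))) :
    ∀ j : ℤ, 1 - (n : ℤ) ≤ j → j ≤ (n : ℤ) - 1 →
      0 < qEven n w j ∧ 0 < qOdd n w j := by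
  intro j hj1 hj2
  exact ⟨qEven_eq_qOdd_neg j ▸ qOdd_pos hw0 hwpos h1 h2 (by omega) (by omega),
    qOdd_pos hw0 hwpos h1 h2 hj1 hj2⟩

/-- in the degree-0/1 WLPR setting (`n ≥ 2`, `λ ∈ (2n−1, 2n)`, `w₀ = 1`,
`w_l > 0` for `l ≤ 2n−1`), if for every `j₀ = 1,…,n−1`
`(∑_{l=j₀}^{n−1} w_{2l+1})/(∑_{l=j₀}^{n−1} w_{2l}) < ‖w¹‖₁/‖w⁰‖₁`
and for every `j₁ = 1,…,n−2`
`‖w¹‖₁/‖w⁰‖₁ < (∑_{l=j₁}^{n−1} w_{2l+1})/(∑_{l=j₁+1}^{n−1} w_{2l})`,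
then all coefficients of the difference mask are positive:
`q_{2j} > 0` and `q_{2j+1} > 0` for all `j = 1−n,…,n−1`. -/
theorem stmt9 (n : ℕ) (hn : 2 ≤ n) (lam : ℝ)
    (hlam1 : 2 * (n : ℝ) - 1 < lam) (hlam2 : lam < 2 * n)
    (w : ℕ → ℝ) (hw0 : w 0 = 1) (hwpos : ∀ l : ℕ, l ≤ 2 * n - 1 → 0 < w l)
    (h1 : ∀ j₀ : ℕ, 1 ≤ j₀ → j₀ ≤ n - 1 →
      (∑ l ∈ Finset.Icc j₀ (n - 1), w (2 * l + 1)) /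
        (∑ l ∈ Finset.Icc j₀ (n - 1), w (2 * l)) < normW1 n w / normW0 n w)
    (h2 : ∀ j₁ : ℕ, 1 ≤ j₁ → j₁ ≤ n - 2 →
      normW1 n w / normW0 n w <
        (∑ l ∈ Finset.Icc j₁ (n - 1), w (2 * l + 1)) /
          (∑ l ∈ Finset.Icc (j₁ + 1) (n - 1), w (2 * l))) :
    ∀ j : ℤ, 1 - (n : ℤ) ≤ j → j ≤ (n : ℤ) - 1 →
      0 < qEven n w j ∧ 0 < qOdd n w j :=
  stmt9_general n w hw0 hwpos h1 h2
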